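/- arXiv:2210.00123 — 3 statements merged into one kernel-verified Lean document; each statement's English description precedes it below -/
import Mathlib

section
/- Let z and y be distinct points in ℝ², with revolving areas A_z and A_y of radius 2 centered at c_z and c_y respectively, such that the unit disc D_z ⊆ A_z, the unit disc D_y ⊆ A_y, A_z ∩ D_y = ∅ and A_y ∩ D_z = ∅. Then ‖c_z − c_y‖ ≥ 2; in particular the open unit discs centered at c_z and c_y are disjoint. -/
open Metric

lemma center_close {E : Type*} [NormedAddCommGroup E] [NormedSpace ℝ E]
    (z c : E) (h : closedBall z 1 ⊆ closedBall c 2) : dist z c ≤ 1 := by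
  by_cases hzc : z = c
  · simp [hzc]
  · set u := ‖z - c‖ with hu
    have hu0 : 0 < u := by
      simpa [hu] using sub_ne_zero_of_ne hzc
    set p := z + u⁻¹ • (z - c) with hp
    have hpz : dist p z = 1 := by
      simp only [hp, dist_eq_norm, add_sub_cancel_left, norm_smul,
        Real.norm_eq_abs, abs_of_pos (inv_pos.2 hu0), ← hu]
      exact inv_mul_cancel₀ hu0.ne'
    have hpc : dist p c = u + 1 := by
      have : p - c = (1 + u⁻¹) • (z - c) := by
        rw [hp]; rw [add_smul, one_smul]; abel
      rw [dist_eq_norm, this, norm_smul]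
      have h1 : 0 < 1 + u⁻¹ := by positivity
      rw [Real.norm_eq_abs, abs_of_pos h1, ← hu]
      field_simp
    have hmem : p ∈ closedBall c 2 := h (by simp [mem_closedBall, hpz])
    rw [mem_closedBall, hpc] at hmem
    rw [dist_eq_norm, ← hu]
    linarith

theorem stmt_1 (z y cz cy : EuclideanSpace ℝ (Fin 2)) (hzy : z ≠ y)
    (hDz : closedBall z 1 ⊆ closedBall cz 2)
    (hDy : closedBall y 1 ⊆ closedBall cy 2)
    (hdisj1 : closedBall cz 2 ∩ closedBall y 1 = ∅)
    (hdisj2 : closedBall cy 2 ∩ closedBall z 1 = ∅) :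
    2 ≤ ‖cz - cy‖ ∧ ball cz 1 ∩ ball cy 1 = ∅ := by
  have h1 : dist y cy ≤ 1 := center_close y cy hDy
  have hd : Disjoint (closedBall cz 2) (closedBall y 1) :=
    Set.disjoint_iff_inter_eq_empty.2 hdisj1
  have h3 : (2 : ℝ) + 1 < dist cz y :=
    (disjoint_closedBall_closedBall_iff (by norm_num) (by norm_num)).1 hd
  have htri : dist cz y ≤ dist cz cy + dist cy y := dist_triangle _ _ _
  have hkey : 2 ≤ dist cz cy := by
    rw [dist_comm cy y] at htri; linarith
  refine ⟨by rwa [← dist_eq_norm], ?_⟩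
  rw [← Set.disjoint_iff_inter_eq_empty]
  exact ball_disjoint_ball (by linarith)
end

section
/- Let c_j, z_j, c_k, z_k ∈ ℝ² satisfy: ‖z_j − c_j‖ ≤ 1, ‖z_k − c_k‖ ≤ 1, ‖c_j − c_k‖ ≥ 2, ‖c_j − z_k‖ ≥ 3, ‖c_k − z_j‖ ≥ 3, and ‖z_j − z_k‖ ≥ 2. Then the minimum distance between the line segments [c_j, z_j] and [c_k, z_k] is at least 2: for all y_j on segment c_j z_j and y_k on segment c_k z_k, ‖y_j − y_k‖ ≥ 2. -/
theorem stmt_4 (cj zj ck zk : EuclideanSpace ℝ (Fin 2))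
    (h1 : ‖zj - cj‖ ≤ 1) (h2 : ‖zk - ck‖ ≤ 1)
    (h3 : 2 ≤ ‖cj - ck‖) (h4 : 3 ≤ ‖cj - zk‖) (h5 : 3 ≤ ‖ck - zj‖)
    (h6 : 2 ≤ ‖zj - zk‖) :
    ∀ yj ∈ segment ℝ cj zj, ∀ yk ∈ segment ℝ ck zk, 2 ≤ ‖yj - yk‖ := by
  rintro yj ⟨a, b, ha, hb, hab, rfl⟩ yk ⟨c, d, hc, hd, hcd, rfl⟩
  set yj := a • cj + b • zj with hyj
  set yk := c • ck + d • zk with hyk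
  have e1 : yj - cj = b • (zj - cj) := by
    rw [hyj, show a = 1 - b from by linarith]; module
  have e2 : yj - zj = a • (cj - zj) := by
    rw [hyj, show a = 1 - b from by linarith]; module
  have e3 : yk - ck = d • (zk - ck) := by
    rw [hyk, show c = 1 - d from by linarith]; module
  have e4 : yk - zk = c • (ck - zk) := by
    rw [hyk, show c = 1 - d from by linarith]; module
  have n1 : ‖yj - cj‖ ≤ b := by
    rw [e1, norm_smul, Real.norm_of_nonneg hb]
    nlinarith [norm_nonneg (zj - cj)]
  have n2 : ‖yj - zj‖ ≤ a := by
    rw [e2, norm_smul, Real.norm_of_nonneg ha, norm_sub_rev]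
    nlinarith [norm_nonneg (zj - cj)]
  have n3 : ‖yk - ck‖ ≤ d := by
    rw [e3, norm_smul, Real.norm_of_nonneg hd]
    nlinarith [norm_nonneg (zk - ck)]
  have n4 : ‖yk - zk‖ ≤ c := by
    rw [e4, norm_smul, Real.norm_of_nonneg hc, norm_sub_rev]
    nlinarith [norm_nonneg (zk - ck)]
  rcases le_total b d with hbd | hbd
  · -- use cj -- zk : ‖cj - zk‖ ≤ ‖yj - cj‖ + ‖yj - yk‖ + ‖yk - zk‖
    have tri : ‖cj - zk‖ ≤ ‖yj - cj‖ + ‖yj - yk‖ + ‖yk - zk‖ := by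
      calc ‖cj - zk‖ = ‖(cj - yj) + (yj - yk) + (yk - zk)‖ := by
            congr 1; abel
        _ ≤ ‖cj - yj‖ + ‖yj - yk‖ + ‖yk - zk‖ := norm_add₃_le
        _ = ‖yj - cj‖ + ‖yj - yk‖ + ‖yk - zk‖ := by rw [norm_sub_rev yj cj]
    linarith
  · -- use ck -- zj
    have tri : ‖ck - zj‖ ≤ ‖yk - ck‖ + ‖yj - yk‖ + ‖yj - zj‖ := by
      calc ‖ck - zj‖ = ‖(ck - yk) + (yk - yj) + (yj - zj)‖ := by
            congr 1; abel
        _ ≤ ‖ck - yk‖ + ‖yk - yj‖ + ‖yj - zj‖ := norm_add₃_le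
        _ = ‖yk - ck‖ + ‖yj - yk‖ + ‖yj - zj‖ := by
            rw [norm_sub_rev yk ck, norm_sub_rev yk yj]
    linarith
end

section
/- Let z ∈ ℝ² and p ∈ ℝ² with 1/2 ≤ ‖p − z‖ ≤ 2. Define ρ(p) to be the point on the ray from p through z at distance 2 from p, i.e., ρ(p) = p + 2·(z − p)/‖z − p‖. Then ρ, restricted to the annulus {p : 1/2 ≤ ‖p − z‖ ≤ 2}, is Lipschitz continuous with Lipschitz constant at most 3 along any differentiable curve: if γ : [a,b] → ℝ² is a C¹ curve with 1/2 ≤ ‖γ(t) − z‖ ≤ 2 for all t, then the arc length of ρ ∘ γ is at most 3 times the arc length of γ. -/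
/-!
In polar coordinates around `z` the retraction maps `(r, θ)` to `(2 - r, θ + π)`: it keeps the
radial component of a velocity and scales the angular one by `(2 - r) / r`, which has absolute
value at most `3` once `r ≥ 1/2`. Hence `‖(ρ ∘ γ)'‖ ≤ 3 ‖γ'‖` pointwise, and integrating gives the
length bound.
-/

open Set MeasureTheory RealInnerProductSpace

section InnerProductSpace

variable {E : Type*} [NormedAddCommGroup E] [InnerProductSpace ℝ E]

theorem norm_smul_starProjection_orthogonal_add_le (K : Submodule ℝ E)
    [K.HasOrthogonalProjection] (k : ℝ) (v : E) :
    ‖k • Kᗮ.starProjection v + K.starProjection v‖ ≤ max |k| 1 * ‖v‖ := by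
  have horth : ⟪k • Kᗮ.starProjection v, K.starProjection v⟫ = 0 :=
    Submodule.inner_left_of_mem_orthogonal (K.starProjection_apply_mem v)
      (Kᗮ.smul_mem k (Kᗮ.starProjection_apply_mem v))
  have hk : k ^ 2 ≤ max |k| 1 ^ 2 := by
    rw [← sq_abs k]
    gcongr
    exact le_max_left _ _
  have h1 : 1 ≤ max |k| 1 ^ 2 := one_le_pow₀ (le_max_right _ _)
  refine le_of_sq_le_sq ?_ (by positivity)
  calc ‖k • Kᗮ.starProjection v + K.starProjection v‖ ^ 2
      = k ^ 2 * ‖Kᗮ.starProjection v‖ ^ 2 + ‖K.starProjection v‖ ^ 2 := by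
        rw [sq, sq, norm_add_sq_eq_norm_sq_add_norm_sq_real horth, norm_smul,
          Real.norm_eq_abs, ← abs_mul_abs_self k]
        ring
    _ ≤ max |k| 1 ^ 2 * ‖Kᗮ.starProjection v‖ ^ 2 +
          max |k| 1 ^ 2 * ‖K.starProjection v‖ ^ 2 := by
        gcongr
        exact le_mul_of_one_le_left (by positivity) h1
    _ = (max |k| 1 * ‖v‖) ^ 2 := by
        rw [mul_pow, K.norm_sq_eq_add_norm_sq_starProjection v]
        ring

theorem HasDerivAt.norm {f : ℝ → E} {f' : E} {t : ℝ} (hf : HasDerivAt f f' t)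
    (h0 : f t ≠ 0) : HasDerivAt (fun s => ‖f s‖) (⟪f t, f'⟫ / ‖f t‖) t := by
  have h := hf.norm_sq.sqrt (by positivity)
  simp only [Real.sqrt_sq (norm_nonneg _)] at h
  convert h using 1
  field_simp

noncomputable def sectorRetraction (z p : E) : E := p + (2 / ‖z - p‖) • (z - p)

theorem HasDerivAt.sectorRetraction {γ : ℝ → E} {v z : E} {t : ℝ} (hγ : HasDerivAt γ v t)
    (hz : γ t ≠ z) :
    HasDerivAt (fun s => sectorRetraction z (γ s))
      ((1 - 2 / ‖z - γ t‖) • (ℝ ∙ (z - γ t))ᗮ.starProjection v +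
        (ℝ ∙ (z - γ t)).starProjection v) t := by
  have hw : z - γ t ≠ 0 := sub_ne_zero.2 hz.symm
  have hr : ‖z - γ t‖ ≠ 0 := norm_ne_zero_iff.2 hw
  have hc := hγ.const_sub z
  have hscalar := (hasDerivAt_const t (2 : ℝ)).div (hc.norm hw) hr
  convert hγ.add (hscalar.smul hc) using 1
  · rfl
  rw [Submodule.starProjection_orthogonal_val, Submodule.starProjection_singleton]
  simp only [Pi.div_apply, inner_neg_right, RCLike.ofReal_real_eq_id, id_eq]
  match_scalars <;> field_simp <;> ring

theorem norm_deriv_sectorRetraction_comp_le {γ : ℝ → E} {v z : E} {t : ℝ}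
    (hγ : HasDerivAt γ v t) (hr : 1 / 2 ≤ ‖γ t - z‖) :
    ‖deriv (fun s => sectorRetraction z (γ s)) t‖ ≤ 3 * ‖v‖ := by
  rw [norm_sub_rev] at hr
  have hz : γ t ≠ z := fun h => by norm_num [h] at hr
  have hinv : 2 / ‖z - γ t‖ ≤ 4 := by
    rw [div_le_iff₀ (by linarith)]
    linarith
  have hscale : max |1 - 2 / ‖z - γ t‖| 1 ≤ 3 :=
    max_le (abs_le.2 ⟨by linarith, by linarith [div_nonneg zero_le_two (norm_nonneg (z - γ t))]⟩)
      (by norm_num)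
  rw [(hγ.sectorRetraction hz).deriv]
  exact (norm_smul_starProjection_orthogonal_add_le _ _ v).trans
    (mul_le_mul_of_nonneg_right hscale (norm_nonneg v))

end InnerProductSpace

theorem ContDiffOn.intervalIntegrable_deriv {F : Type*} [NormedAddCommGroup F]
    [NormedSpace ℝ F] {g : ℝ → F} {a b : ℝ} (hab : a ≤ b) (hg : ContDiffOn ℝ 1 g (Icc a b)) :
    IntervalIntegrable (deriv g) volume a b := by
  rcases hab.eq_or_lt with rfl | hlt
  · exact IntervalIntegrable.refl
  have hcont : ContinuousOn (derivWithin g (Icc a b)) (uIcc a b) := by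
    rw [uIcc_of_le hab]
    exact hg.continuousOn_derivWithin (uniqueDiffOn_Icc hlt) le_rfl
  refine hcont.intervalIntegrable.congr_uIoo fun t ht => ?_
  rw [uIoo_of_le hab] at ht
  exact derivWithin_of_mem_nhds (Icc_mem_nhds ht.1 ht.2)

theorem intervalIntegral.integral_mono_of_nonneg_of_le_Ioo {f g : ℝ → ℝ} {a b : ℝ}
    (hab : a ≤ b) (hf : ∀ t ∈ Ioo a b, 0 ≤ f t) (hfg : ∀ t ∈ Ioo a b, f t ≤ g t)
    (hg : IntervalIntegrable g volume a b) :
    ∫ t in a..b, f t ≤ ∫ t in a..b, g t := by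
  simp only [intervalIntegral.integral_of_le hab, integral_Ioc_eq_integral_Ioo]
  exact setIntegral_mono_of_nonneg hf hfg (hg.1.mono_set Ioo_subset_Ioc_self)

theorem stmt_9 (z : EuclideanSpace ℝ (Fin 2)) (a b : ℝ) (hab : a ≤ b)
    (γ : ℝ → EuclideanSpace ℝ (Fin 2))
    (hγ : ContDiffOn ℝ 1 γ (Set.Icc a b))
    (hann : ∀ t ∈ Set.Icc a b, 1/2 ≤ ‖γ t - z‖ ∧ ‖γ t - z‖ ≤ 2) :
    (∫ t in a..b, ‖deriv (fun s => γ s + (2 / ‖z - γ s‖) • (z - γ s)) t‖) ≤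
      3 * ∫ t in a..b, ‖deriv γ t‖ := by
  have hderiv : ∀ t ∈ Ioo a b, HasDerivAt γ (deriv γ t) t := fun t ht =>
    ((hγ.differentiableOn one_ne_zero).differentiableAt (Icc_mem_nhds ht.1 ht.2)).hasDerivAt
  rw [← intervalIntegral.integral_const_mul]
  refine intervalIntegral.integral_mono_of_nonneg_of_le_Ioo hab (fun _ _ => norm_nonneg _)
    (fun t ht => ?_) ((hγ.intervalIntegrable_deriv hab).norm.const_mul 3)
  exact norm_deriv_sectorRetraction_comp_le (hderiv t ht) (hann t (Ioo_subset_Icc_self ht)).1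
end
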